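/- arXiv:1601.03353 — 5 statements merged into one kernel-verified Lean document; each statement's English description precedes it below -/
import Mathlib

section
/- Let λ ∈ ℂ with |λ| = 1 and suppose λ is not a root of unity. Consider the symbol φ(z) = λz. Then the composition operator C_φ : A(𝔻) → A(𝔻) is mean ergodic, and its Cesàro means (C_φ)_[n] f converge in the sup norm to the constant function f(0) for every f ∈ A(𝔻). -/
open Metric Set Filter Complex
open scoped Topology Classical

noncomputable section

/-- Membership in the disc algebra `A(𝔻)`: continuous on the closed unit disc and
holomorphic on the open unit disc. -/
def IsDiscAlg (f : ℂ → ℂ) : Prop :=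
  ContinuousOn f (closedBall (0:ℂ) 1) ∧ DifferentiableOn ℂ f (ball (0:ℂ) 1)

/-- Membership in `H^∞(𝔻)`: bounded and holomorphic on the open unit disc. -/
def IsHInf (f : ℂ → ℂ) : Prop :=
  DifferentiableOn ℂ f (ball (0:ℂ) 1) ∧ ∃ M : ℝ, ∀ z ∈ ball (0:ℂ) 1, ‖f z‖ ≤ M

/-- The Cesàro means `(C_φ)_[n] f = (1/n) ∑_{m=1}^n f ∘ φ^m` of the composition
operator `C_φ f = f ∘ φ`. -/
def cesaro (φ f : ℂ → ℂ) (n : ℕ) (z : ℂ) : ℂ :=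
  (n : ℂ)⁻¹ * ∑ m ∈ Finset.Icc 1 n, f (φ^[m] z)

/-- `C_φ` is mean ergodic on `A(𝔻)`: for each `f ∈ A(𝔻)` the Cesàro means converge
in the sup norm on the closed disc. -/
def MeanErgodicDiscAlg (φ : ℂ → ℂ) : Prop :=
  ∀ f : ℂ → ℂ, IsDiscAlg f →
    ∃ g : ℂ → ℂ, TendstoUniformlyOn (cesaro φ f) g atTop (closedBall (0:ℂ) 1)

/-- `C_φ` is uniformly mean ergodic on `A(𝔻)`: the Cesàro means converge in operator
norm, i.e. uniformly over the unit ball of `A(𝔻)`. -/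
def UnifMeanErgodicDiscAlg (φ : ℂ → ℂ) : Prop :=
  ∃ P : (ℂ → ℂ) → ℂ → ℂ, ∀ ε > (0:ℝ), ∃ N : ℕ, ∀ n ≥ N,
    ∀ f : ℂ → ℂ, IsDiscAlg f → (∀ z ∈ closedBall (0:ℂ) 1, ‖f z‖ ≤ 1) →
      ∀ z ∈ closedBall (0:ℂ) 1, ‖cesaro φ f n z - P f z‖ ≤ ε

/-- `C_φ` is mean ergodic on `H^∞(𝔻)`: for each `f ∈ H^∞(𝔻)` the Cesàro means converge
in the sup norm on the open disc. -/
def MeanErgodicHInf (φ : ℂ → ℂ) : Prop :=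
  ∀ f : ℂ → ℂ, IsHInf f →
    ∃ g : ℂ → ℂ, TendstoUniformlyOn (cesaro φ f) g atTop (ball (0:ℂ) 1)

/-- `C_φ` is uniformly mean ergodic on `H^∞(𝔻)`: the Cesàro means converge in operator
norm, i.e. uniformly over the unit ball of `H^∞(𝔻)`. -/
def UnifMeanErgodicHInf (φ : ℂ → ℂ) : Prop :=
  ∃ P : (ℂ → ℂ) → ℂ → ℂ, ∀ ε > (0:ℝ), ∃ N : ℕ, ∀ n ≥ N,
    ∀ f : ℂ → ℂ, IsHInf f → (∀ z ∈ ball (0:ℂ) 1, ‖f z‖ ≤ 1) →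
      ∀ z ∈ ball (0:ℂ) 1, ‖cesaro φ f n z - P f z‖ ≤ ε

/-- `φ` is an automorphism (biholomorphic self-map) of the open unit disc. -/
def IsDiscAutomorphism (φ : ℂ → ℂ) : Prop :=
  DifferentiableOn ℂ φ (ball (0:ℂ) 1) ∧ MapsTo φ (ball (0:ℂ) 1) (ball (0:ℂ) 1) ∧
  ∃ ψ : ℂ → ℂ, DifferentiableOn ℂ ψ (ball (0:ℂ) 1) ∧
    MapsTo ψ (ball (0:ℂ) 1) (ball (0:ℂ) 1) ∧
    (∀ z ∈ ball (0:ℂ) 1, ψ (φ z) = z) ∧ ∀ z ∈ ball (0:ℂ) 1, φ (ψ z) = z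

/-- An elliptic automorphism of the disc: an automorphism with a fixed point in `𝔻`. -/
def IsEllipticAutomorphism (φ : ℂ → ℂ) : Prop :=
  IsDiscAutomorphism φ ∧ ∃ z ∈ ball (0:ℂ) 1, φ z = z

/-- A hyperbolic automorphism of the disc: an automorphism with exactly two fixed
points, both on the unit circle. -/
def IsHyperbolicAutomorphism (φ : ℂ → ℂ) : Prop :=
  IsDiscAutomorphism φ ∧ ∃ p q : ℂ, p ≠ q ∧ ‖p‖ = 1 ∧ ‖q‖ = 1 ∧ φ p = p ∧ φ q = q ∧
    ∀ z ∈ closedBall (0:ℂ) 1, φ z = z → z = p ∨ z = q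

/-- A parabolic automorphism of the disc: an automorphism with exactly one fixed
point, lying on the unit circle. -/
def IsParabolicAutomorphism (φ : ℂ → ℂ) : Prop :=
  IsDiscAutomorphism φ ∧ ∃ p : ℂ, ‖p‖ = 1 ∧ φ p = p ∧
    ∀ z ∈ closedBall (0:ℂ) 1, φ z = z → z = p

/-- A set `J ⊆ ℕ` has density one: `#(J ∩ [0,N]) / N → 1` as `N → ∞`. -/
def HasDensityOne (J : Set ℕ) : Prop :=
  Tendsto (fun N : ℕ => (((Finset.range (N + 1)).filter (fun n => n ∈ J)).card : ℝ) / N)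
    atTop (𝓝 1)

/-- A typical weight on `𝔻`: continuous, strictly positive, bounded, radial,
non-increasing in `|z|`, and tending to `0` as `|z| → 1`. -/
def IsTypicalWeight (v : ℂ → ℝ) : Prop :=
  ContinuousOn v (ball (0:ℂ) 1) ∧ (∀ z ∈ ball (0:ℂ) 1, 0 < v z) ∧
  (∃ M : ℝ, ∀ z ∈ ball (0:ℂ) 1, v z ≤ M) ∧
  (∀ z ∈ ball (0:ℂ) 1, ∀ w ∈ ball (0:ℂ) 1, ‖z‖ = ‖w‖ → v z = v w) ∧
  (∀ z ∈ ball (0:ℂ) 1, ∀ w ∈ ball (0:ℂ) 1, ‖z‖ ≤ ‖w‖ → v w ≤ v z) ∧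
  (∀ ε > (0:ℝ), ∃ r : ℝ, r < 1 ∧ ∀ z ∈ ball (0:ℂ) 1, r ≤ ‖z‖ → v z < ε)

/-- Membership in the weighted space `H_v^∞`. -/
def IsHvInf (v : ℂ → ℝ) (f : ℂ → ℂ) : Prop :=
  DifferentiableOn ℂ f (ball (0:ℂ) 1) ∧ ∃ M : ℝ, ∀ z ∈ ball (0:ℂ) 1, v z * ‖f z‖ ≤ M

/-- Membership in the weighted space `H_v^0`. -/
def IsHv0 (v : ℂ → ℝ) (f : ℂ → ℂ) : Prop :=
  IsHvInf v f ∧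
  ∀ ε > (0:ℝ), ∃ r : ℝ, r < 1 ∧ ∀ z ∈ ball (0:ℂ) 1, r ≤ ‖z‖ → v z * ‖f z‖ < ε

/-! The Cesàro means of `C_φ` are sup-norm contractions on the closed disc, so it suffices to
prove convergence on a dense subset of `A(𝔻)`. Polynomials are dense: dilate `f` to `f(r·)`,
which is holomorphic on a larger disc, and truncate its Taylor series. On a monomial, the
Cesàro mean of `c z^k` is `c z^k` times the average `(1/n) ∑_{m=1}^n (λ^k)^m`, which tends to
`0` for `k ≥ 1` because `λ^k ≠ 1`. -/

open Polynomial
open scoped NNReal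

lemma cesaro_add (φ f g : ℂ → ℂ) (n : ℕ) (z : ℂ) :
    cesaro φ (f + g) n z = cesaro φ f n z + cesaro φ g n z := by
  simp only [cesaro, Pi.add_apply, Finset.sum_add_distrib, mul_add]

lemma cesaro_sub (φ f g : ℂ → ℂ) (n : ℕ) (z : ℂ) :
    cesaro φ (f - g) n z = cesaro φ f n z - cesaro φ g n z := by
  simp only [cesaro, Pi.sub_apply, Finset.sum_sub_distrib, mul_sub]

section General

variable {φ : ℂ → ℂ} {s : Set ℂ}

lemma norm_cesaro_le (hφ : MapsTo φ s s) {f : ℂ → ℂ} {C : ℝ} (hf : ∀ w ∈ s, ‖f w‖ ≤ C)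
    (n : ℕ) {z : ℂ} (hz : z ∈ s) : ‖cesaro φ f n z‖ ≤ C := by
  have hC : 0 ≤ C := (norm_nonneg _).trans (hf z hz)
  rcases n.eq_zero_or_pos with rfl | hn
  · simpa [cesaro] using hC
  have hsum := norm_sum_le_of_le (Finset.Icc 1 n) fun m _ => hf _ (hφ.iterate m hz)
  rw [cesaro, norm_mul, norm_inv, Complex.norm_natCast, inv_mul_le_iff₀ (by positivity)]
  simpa using hsum

lemma tendstoUniformlyOn_cesaro_of_approx (hφ : MapsTo φ s s) {a : ℂ} (ha : a ∈ s)
    {f : ℂ → ℂ} (happrox : ∀ ε > 0, ∃ g : ℂ → ℂ, (∀ w ∈ s, ‖f w - g w‖ ≤ ε) ∧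
      TendstoUniformlyOn (cesaro φ g) (fun _ => g a) atTop s) :
    TendstoUniformlyOn (cesaro φ f) (fun _ => f a) atTop s := by
  rw [Metric.tendstoUniformlyOn_iff]
  intro ε hε
  obtain ⟨g, hfg, hg⟩ := happrox (ε / 3) (by positivity)
  filter_upwards [Metric.tendstoUniformlyOn_iff.1 hg (ε / 3) (by positivity)] with n hn z hz
  have hmean : ‖cesaro φ f n z - cesaro φ g n z‖ ≤ ε / 3 := by
    rw [← cesaro_sub]
    exact norm_cesaro_le hφ hfg n hz
  have hg_lim := hn z hz
  rw [dist_eq_norm] at hg_lim ⊢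
  calc ‖f a - cesaro φ f n z‖
      = ‖(f a - g a) + (g a - cesaro φ g n z) - (cesaro φ f n z - cesaro φ g n z)‖ := by
        congr 1; ring
    _ ≤ ‖f a - g a‖ + ‖g a - cesaro φ g n z‖ + ‖cesaro φ f n z - cesaro φ g n z‖ :=
        (norm_sub_le _ _).trans (add_le_add_left (norm_add_le _ _) _)
    _ < ε / 3 + ε / 3 + ε / 3 := by linarith [hfg a ha]
    _ = ε := by ring

end General

lemma tendstoUniformlyOn_mul_of_tendsto_zero {ι α R : Type*} [SeminormedRing R] {l : Filter ι}
    {a : ι → R} (ha : Tendsto a l (𝓝 0)) {h : α → R} {s : Set α} {C : ℝ}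
    (hh : ∀ x ∈ s, ‖h x‖ ≤ C) :
    TendstoUniformlyOn (fun i x => a i * h x) (fun _ => 0) l s := by
  refine (SeminormedAddGroup.tendstoUniformlyOn_zero (G := R)).2 fun ε hε => ?_
  have hC : 0 < |C| + 1 := by positivity
  filter_upwards [(tendsto_zero_iff_norm_tendsto_zero.1 ha).eventually
    (gt_mem_nhds (div_pos hε hC))] with i hi x hx
  calc ‖a i * h x‖ ≤ ‖a i‖ * (|C| + 1) :=
        (norm_mul_le _ _).trans (by gcongr; linarith [hh x hx, le_abs_self C])
    _ < ε / (|C| + 1) * (|C| + 1) := by gcongr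
    _ = ε := div_mul_cancel₀ ε hC.ne'

lemma norm_sum_Icc_pow_le {μ : ℂ} (hμ : ‖μ‖ ≤ 1) (hμ1 : μ ≠ 1) (n : ℕ) :
    ‖∑ m ∈ Finset.Icc 1 n, μ ^ m‖ ≤ 2 / ‖μ - 1‖ := by
  rw [← Finset.Ico_add_one_right_eq_Icc, geom_sum_Ico hμ1 (by omega), norm_div]
  gcongr
  calc ‖μ ^ (n + 1) - μ ^ 1‖ ≤ ‖μ‖ ^ (n + 1) + ‖μ‖ ^ 1 := by
        rw [← norm_pow, ← norm_pow]
        exact norm_sub_le _ _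
    _ ≤ 1 + 1 := by gcongr <;> exact pow_le_one₀ (norm_nonneg _) hμ
    _ = 2 := by norm_num

lemma tendsto_average_pow_of_ne_one {μ : ℂ} (hμ : ‖μ‖ ≤ 1) (hμ1 : μ ≠ 1) :
    Tendsto (fun n : ℕ => (n : ℂ)⁻¹ * ∑ m ∈ Finset.Icc 1 n, μ ^ m) atTop (𝓝 0) := by
  refine squeeze_zero_norm (fun n => ?_)
    (tendsto_const_div_atTop_nhds_zero_nat (2 / ‖μ - 1‖))
  rw [norm_mul, norm_inv, Complex.norm_natCast, inv_mul_eq_div]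
  gcongr
  exact norm_sum_Icc_pow_le hμ hμ1 n

lemma tendsto_average_one_pow :
    Tendsto (fun n : ℕ => (n : ℂ)⁻¹ * ∑ m ∈ Finset.Icc 1 n, (1 : ℂ) ^ m) atTop (𝓝 1) := by
  refine tendsto_const_nhds.congr' ?_
  filter_upwards [eventually_ge_atTop 1] with n hn
  have : (n : ℂ) ≠ 0 := by exact_mod_cast (by omega : n ≠ 0)
  simp [this]

lemma cesaro_mul_left_monomial (lam c : ℂ) (k n : ℕ) (z : ℂ) :
    cesaro (lam * ·) (fun w => c * w ^ k) n z
      = ((n : ℂ)⁻¹ * ∑ m ∈ Finset.Icc 1 n, (lam ^ k) ^ m) * (c * z ^ k) := by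
  simp only [cesaro, mul_left_iterate_apply, Finset.mul_sum, Finset.sum_mul]
  refine Finset.sum_congr rfl fun m _ => ?_
  ring

section Rotation

variable {lam : ℂ}

lemma tendstoUniformlyOn_cesaro_mul_left_monomial (hlam : ‖lam‖ ≤ 1)
    (hroot : ∀ j : ℕ, 0 < j → lam ^ j ≠ 1) (c : ℂ) (k : ℕ) :
    TendstoUniformlyOn (cesaro (lam * ·) (fun w => c * w ^ k)) (fun _ => c * 0 ^ k) atTop
      (closedBall 0 1) := by
  simp only [funext₂ (cesaro_mul_left_monomial lam c k)]
  rcases k.eq_zero_or_pos with rfl | hk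
  · simpa using (tendsto_average_one_pow.mul_const c).tendstoUniformlyOn_const
      (closedBall (0:ℂ) 1)
  · have hlamk : ‖lam ^ k‖ ≤ 1 := by simpa using pow_le_one₀ (norm_nonneg _) hlam
    have hbound : ∀ z ∈ closedBall (0:ℂ) 1, ‖c * z ^ k‖ ≤ ‖c‖ := fun z hz => by
      rw [norm_mul, norm_pow]
      exact mul_le_of_le_one_right (norm_nonneg _)
        (pow_le_one₀ (norm_nonneg _) (mem_closedBall_zero_iff.1 hz))
    simpa [zero_pow hk.ne'] using tendstoUniformlyOn_mul_of_tendsto_zero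
      (tendsto_average_pow_of_ne_one hlamk (hroot k hk)) hbound

lemma tendstoUniformlyOn_cesaro_mul_left_polynomial (hlam : ‖lam‖ ≤ 1)
    (hroot : ∀ j : ℕ, 0 < j → lam ^ j ≠ 1) (p : ℂ[X]) :
    TendstoUniformlyOn (cesaro (lam * ·) (p.eval ·)) (fun _ => p.eval 0) atTop
      (closedBall 0 1) := by
  induction p using Polynomial.induction_on' with
  | add p q hp hq =>
    convert hp.add hq using 1
    · funext n z
      simp only [eval_add]
      exact cesaro_add _ _ _ n z
    · funext z
      simp
  | monomial k c => simpa using tendstoUniformlyOn_cesaro_mul_left_monomial hlam hroot c k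

end Rotation

lemma exists_dilation_close {f : ℂ → ℂ} (hf : ContinuousOn f (closedBall 0 1)) {ε : ℝ}
    (hε : 0 < ε) : ∃ r ∈ Ioo (0:ℝ) 1, ∀ w ∈ closedBall (0:ℂ) 1, ‖f w - f (r * w)‖ ≤ ε := by
  obtain ⟨δ, hδ, hfδ⟩ := Metric.uniformContinuousOn_iff.1
    ((isCompact_closedBall 0 1).uniformContinuousOn_of_continuous hf) ε hε
  set r : ℝ := max (1 / 2) (1 - δ / 2) with hr
  have hr0 : 0 < r := by positivity
  have hr1 : r < 1 := max_lt (by norm_num) (by linarith)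
  have hrδ : 1 - r < δ := by linarith [le_max_right (1 / 2) (1 - δ / 2)]
  refine ⟨r, ⟨hr0, hr1⟩, fun w hw => ?_⟩
  have hw1 : ‖w‖ ≤ 1 := mem_closedBall_zero_iff.1 hw
  have hrw : (r : ℂ) * w ∈ closedBall (0:ℂ) 1 := by
    rw [mem_closedBall_zero_iff, norm_mul, Complex.norm_of_nonneg hr0.le]
    nlinarith [norm_nonneg w]
  have hdist : dist w (r * w) < δ := by
    rw [dist_eq_norm, ← one_sub_mul, ← Complex.ofReal_one, ← Complex.ofReal_sub, norm_mul,
      Complex.norm_of_nonneg (by linarith)]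
    nlinarith [norm_nonneg w]
  rw [← dist_eq_norm]
  exact (hfδ w hw _ hrw hdist).le

lemma exists_polynomial_close_of_differentiableOn {g : ℂ → ℂ} {ρ R : ℝ≥0} (hρR : ρ < R)
    (hg : DifferentiableOn ℂ g (ball 0 R)) {ε : ℝ} (hε : 0 < ε) :
    ∃ p : ℂ[X], ∀ w ∈ closedBall (0:ℂ) ρ, ‖g w - p.eval w‖ ≤ ε := by
  obtain ⟨R₁, hρR₁, hR₁R⟩ := exists_between hρR
  obtain ⟨r, hρr, hrR₁⟩ := exists_between hρR₁
  have hps := (hg.mono (closedBall_subset_ball hR₁R)).hasFPowerSeriesOnBall (pos_of_gt hρR₁)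
  obtain ⟨N, hN⟩ := (Metric.tendstoUniformlyOn_iff.1
    (hps.tendstoUniformlyOn (ENNReal.coe_lt_coe.2 hrR₁)) ε hε).exists
  set q := cauchyPowerSeries g 0 R₁
  refine ⟨∑ k ∈ Finset.range N, C (q.coeff k) * X ^ k, fun w hw => ?_⟩
  have hwr : w ∈ ball (0:ℂ) r := closedBall_subset_ball (NNReal.coe_lt_coe.2 hρr) hw
  have hsum : q.partialSum N w = (∑ k ∈ Finset.range N, C (q.coeff k) * X ^ k).eval w := by
    simp only [FormalMultilinearSeries.partialSum, q.apply_eq_pow_smul_coeff, smul_eq_mul,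
      eval_finsetSum, eval_mul, eval_C, eval_pow, eval_X, mul_comm]
  rw [← hsum, ← dist_eq_norm]
  simpa using (hN w hwr).le

lemma IsDiscAlg.exists_polynomial_close {f : ℂ → ℂ} (hf : IsDiscAlg f) {ε : ℝ} (hε : 0 < ε) :
    ∃ p : ℂ[X], ∀ w ∈ closedBall (0:ℂ) 1, ‖f w - p.eval w‖ ≤ ε := by
  obtain ⟨r, ⟨hr0, hr1⟩, hdil⟩ := exists_dilation_close hf.1 (half_pos hε)
  have hR : (1 : ℝ≥0) < r⁻¹.toNNReal := by
    rw [Real.lt_toNNReal_iff_coe_lt, NNReal.coe_one]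
    exact one_lt_inv₀ hr0 |>.2 hr1
  have hdiff : DifferentiableOn ℂ (fun w => f (r * w)) (ball 0 r⁻¹.toNNReal) := by
    refine hf.2.comp (differentiableOn_id.const_mul _) fun w hw => ?_
    rw [Real.coe_toNNReal _ (inv_nonneg.2 hr0.le), mem_ball_zero_iff] at hw
    rw [mem_ball_zero_iff, norm_mul, Complex.norm_of_nonneg hr0.le]
    calc r * ‖w‖ < r * r⁻¹ := by gcongr
      _ = 1 := mul_inv_cancel₀ hr0.ne'
  obtain ⟨p, hp⟩ := exists_polynomial_close_of_differentiableOn hR hdiff (half_pos hε)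
  refine ⟨p, fun w hw => ?_⟩
  calc ‖f w - p.eval w‖ ≤ ‖f w - f (r * w)‖ + ‖f (r * w) - p.eval w‖ :=
        norm_sub_le_norm_sub_add_norm_sub _ _ _
    _ ≤ ε / 2 + ε / 2 := add_le_add (hdil w hw) (hp w (by simpa using hw))
    _ = ε := add_halves ε

/-- **Rotation symbol, irrational case, on `A(𝔻)`.** If `|λ| = 1` and `λ` is not a root of
unity, then for `φ(z) = λz` the composition operator `C_φ : A(𝔻) → A(𝔻)` is mean ergodic
and its Cesàro means converge in the sup norm to the constant function `f(0)`. -/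
theorem stmt_1 (lam : ℂ) (hlam : ‖lam‖ = 1) (hnotroot : ∀ j : ℕ, 0 < j → lam ^ j ≠ 1) :
    MeanErgodicDiscAlg (fun w => lam * w) ∧
    ∀ f : ℂ → ℂ, IsDiscAlg f →
      TendstoUniformlyOn (cesaro (fun w => lam * w) f) (fun _ => f 0)
        atTop (closedBall (0:ℂ) 1) := by
  have hmaps : MapsTo (lam * ·) (closedBall (0:ℂ) 1) (closedBall 0 1) := fun w hw => by
    simpa [norm_mul, hlam] using hw
  have hconv : ∀ f : ℂ → ℂ, IsDiscAlg f →
      TendstoUniformlyOn (cesaro (lam * ·) f) (fun _ => f 0) atTop (closedBall 0 1) :=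
    fun f hf => tendstoUniformlyOn_cesaro_of_approx hmaps (mem_closedBall_self zero_le_one)
      fun ε hε =>
        let ⟨p, hp⟩ := hf.exists_polynomial_close hε
        ⟨_, hp, tendstoUniformlyOn_cesaro_mul_left_polynomial hlam.le hnotroot p⟩
  exact ⟨fun f hf => ⟨_, hconv f hf⟩, hconv⟩
end
end

section
/- Let λ ∈ ℂ with |λ| = 1 and suppose λ is not a root of unity. Consider the symbol φ(z) = λz. Then the composition operator C_φ : A(𝔻) → A(𝔻) is not uniformly mean ergodic, i.e. its Cesàro means (C_φ)_[n] do not converge in operator norm. -/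
open Metric Set Filter Complex
open scoped Topology Classical

noncomputable section

/-!
Suppose the Cesàro means of `C_φ`, `φ z = λ z`, converged in operator norm. Then they would be
uniformly Cauchy over the unit ball of `A(𝔻)`, in particular on the monomials `z ↦ z ^ k`
evaluated at `z = 1`, where they become the averages `(1/n) ∑_{m=1}^n μ ^ m` of the powers
of `μ = λ ^ k`. Since `λ` is not a root of unity, `μ ≠ 1`, so these averages tend to `0`;
but the powers of `λ` return arbitrarily close to `1`, so for a suitable `k` the average at
any prescribed `n` is still close to `1`. No single threshold `N` can serve all `k`.
-/

def powMean {𝕜 : Type*} [RCLike 𝕜] (n : ℕ) (μ : 𝕜) : 𝕜 :=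
  (n : 𝕜)⁻¹ * ∑ m ∈ Finset.Icc 1 n, μ ^ m

section PowMean

variable {𝕜 : Type*}

theorem norm_pow_sub_one_le_mul [NormedField 𝕜] {μ : 𝕜} (hμ : ‖μ‖ ≤ 1) (m : ℕ) :
    ‖μ ^ m - 1‖ ≤ m * ‖μ - 1‖ := by
  induction m with
  | zero => simp
  | succ m ih =>
    calc ‖μ ^ (m + 1) - 1‖ = ‖μ ^ m * (μ - 1) + (μ ^ m - 1)‖ := by ring_nf
      _ ≤ ‖μ ^ m‖ * ‖μ - 1‖ + ‖μ ^ m - 1‖ := by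
        rw [← norm_mul]; exact norm_add_le _ _
      _ ≤ 1 * ‖μ - 1‖ + m * ‖μ - 1‖ := by
        gcongr
        rw [norm_pow]; exact pow_le_one₀ (norm_nonneg μ) hμ
      _ = (m + 1 : ℕ) * ‖μ - 1‖ := by push_cast; ring

variable [RCLike 𝕜] {μ : 𝕜}

theorem norm_powMean_sub_one_le (hμ : ‖μ‖ ≤ 1) {n : ℕ} (hn : 0 < n) :
    ‖powMean n μ - 1‖ ≤ n * ‖μ - 1‖ := by
  have hn' : (n : 𝕜) ≠ 0 := by exact_mod_cast hn.ne'
  have h_eq : powMean n μ - 1 = (n : 𝕜)⁻¹ * ∑ m ∈ Finset.Icc 1 n, (μ ^ m - 1) := by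
    simp [powMean, Finset.sum_sub_distrib, mul_sub, inv_mul_cancel₀ hn']
  have h_sum : ∑ m ∈ Finset.Icc 1 n, ‖μ ^ m - 1‖ ≤ n * (n * ‖μ - 1‖) := by
    calc ∑ m ∈ Finset.Icc 1 n, ‖μ ^ m - 1‖ ≤ ∑ _m ∈ Finset.Icc 1 n, n * ‖μ - 1‖ := by
          refine Finset.sum_le_sum fun m hm => (norm_pow_sub_one_le_mul hμ m).trans ?_
          gcongr
          exact_mod_cast (Finset.mem_Icc.mp hm).2
      _ = n * (n * ‖μ - 1‖) := by simp
  calc ‖powMean n μ - 1‖ ≤ (n : ℝ)⁻¹ * ∑ m ∈ Finset.Icc 1 n, ‖μ ^ m - 1‖ := by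
        rw [h_eq, norm_mul, norm_inv, RCLike.norm_natCast]
        gcongr
        exact norm_sum_le _ _
    _ ≤ (n : ℝ)⁻¹ * (n * (n * ‖μ - 1‖)) := by gcongr
    _ = n * ‖μ - 1‖ := by field_simp

theorem norm_powMean_le (hμ : ‖μ‖ ≤ 1) (hμ1 : μ ≠ 1) (n : ℕ) :
    ‖powMean n μ‖ ≤ 2 / ‖μ - 1‖ / n := by
  have hμ1' : 0 < ‖μ - 1‖ := norm_pos_iff.mpr (sub_ne_zero.mpr hμ1)
  have h_geom : ∑ m ∈ Finset.Icc 1 n, μ ^ m = (μ ^ (n + 1) - μ) / (μ - 1) := by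
    rw [← Finset.Ico_add_one_right_eq_Icc, geom_sum_Ico hμ1 (by omega), pow_one]
  have h_num : ‖μ ^ (n + 1) - μ‖ ≤ 2 := by
    calc ‖μ ^ (n + 1) - μ‖ ≤ ‖μ‖ ^ (n + 1) + ‖μ‖ := by rw [← norm_pow]; exact norm_sub_le _ _
      _ ≤ 1 + 1 := by gcongr; exact pow_le_one₀ (norm_nonneg μ) hμ
      _ = 2 := by norm_num
  rw [powMean, h_geom, norm_mul, norm_inv, RCLike.norm_natCast, norm_div, inv_mul_eq_div]
  gcongr

theorem tendsto_powMean_zero (hμ : ‖μ‖ ≤ 1) (hμ1 : μ ≠ 1) :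
    Tendsto (fun n => powMean n μ) atTop (𝓝 0) :=
  squeeze_zero_norm (norm_powMean_le hμ hμ1) (tendsto_const_div_atTop_nhds_zero_nat _)

end PowMean

/-- By compactness of the closed unit ball, two powers `λ ^ a`, `λ ^ b` with `a < b` are
arbitrarily close, and `‖λ ^ b - λ ^ a‖ = ‖λ ^ (b - a) - 1‖`. -/
theorem exists_pow_sub_one_lt {𝕜 : Type*} [NormedField 𝕜] [ProperSpace 𝕜] {lam : 𝕜}
    (hlam : ‖lam‖ = 1) {δ : ℝ} (hδ : 0 < δ) : ∃ k : ℕ, 0 < k ∧ ‖lam ^ k - 1‖ < δ := by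
  have h_mem : ∀ n : ℕ, lam ^ n ∈ closedBall (0 : 𝕜) 1 := by simp [norm_pow, hlam]
  obtain ⟨a, -, ψ, hψ, h_lim⟩ := (isCompact_closedBall (0 : 𝕜) 1).tendsto_subseq h_mem
  obtain ⟨N, hN⟩ := Metric.cauchySeq_iff.mp h_lim.cauchySeq δ hδ
  have h_lt : ψ N < ψ (N + 1) := hψ N.lt_succ_self
  refine ⟨ψ (N + 1) - ψ N, by omega, ?_⟩
  have h_split : lam ^ ψ (N + 1) - lam ^ ψ N = lam ^ ψ N * (lam ^ (ψ (N + 1) - ψ N) - 1) := by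
    rw [mul_sub, ← pow_add, Nat.add_sub_cancel' h_lt.le, mul_one]
  simpa [dist_eq_norm, h_split, norm_pow, hlam] using hN (N + 1) N.le_succ N le_rfl

theorem UnifMeanErgodicDiscAlg.exists_norm_cesaro_sub_le {φ : ℂ → ℂ}
    (h : UnifMeanErgodicDiscAlg φ) {ε : ℝ} (hε : 0 < ε) :
    ∃ N : ℕ, ∀ n ≥ N, ∀ n' ≥ N, ∀ f : ℂ → ℂ, IsDiscAlg f →
      (∀ z ∈ closedBall (0:ℂ) 1, ‖f z‖ ≤ 1) →
        ∀ z ∈ closedBall (0:ℂ) 1, ‖cesaro φ f n z - cesaro φ f n' z‖ ≤ ε := by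
  obtain ⟨P, hP⟩ := h
  obtain ⟨N, hN⟩ := hP (ε / 2) (half_pos hε)
  refine ⟨N, fun n hn n' hn' f hf hf1 z hz => ?_⟩
  calc ‖cesaro φ f n z - cesaro φ f n' z‖
      = ‖(cesaro φ f n z - P f z) - (cesaro φ f n' z - P f z)‖ := by ring_nf
    _ ≤ ε / 2 + ε / 2 :=
      (norm_sub_le _ _).trans (add_le_add (hN n hn f hf hf1 z hz) (hN n' hn' f hf hf1 z hz))
    _ = ε := add_halves ε

theorem isDiscAlg_pow (k : ℕ) : IsDiscAlg (fun z => z ^ k) :=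
  ⟨(continuous_pow k).continuousOn, (differentiable_pow k).differentiableOn⟩

theorem cesaro_mul_left_pow_one (lam : ℂ) (k n : ℕ) :
    cesaro (fun w => lam * w) (fun z => z ^ k) n 1 = powMean n (lam ^ k) := by
  simp only [cesaro, powMean, mul_left_iterate_apply_one, ← pow_mul, mul_comm]

/-- **Rotation symbol, irrational case: no uniform mean ergodicity on `A(𝔻)`.** If `|λ| = 1`
and `λ` is not a root of unity, then for `φ(z) = λz` the composition operator
`C_φ : A(𝔻) → A(𝔻)` is not uniformly mean ergodic. -/
theorem stmt_2 (lam : ℂ) (hlam : ‖lam‖ = 1) (hnotroot : ∀ j : ℕ, 0 < j → lam ^ j ≠ 1) :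
    ¬ UnifMeanErgodicDiscAlg (fun w => lam * w) := by
  intro h_ume
  obtain ⟨N, hN⟩ := h_ume.exists_norm_cesaro_sub_le (ε := 1 / 4) (by norm_num)
  obtain ⟨k, hk, h_near⟩ := exists_pow_sub_one_lt hlam (δ := 1 / (4 * (N + 1))) (by positivity)
  set μ := lam ^ k
  have hμ : ‖μ‖ ≤ 1 := by simp [μ, hlam]
  have h_start : ‖powMean (N + 1) μ - 1‖ ≤ 1 / 4 := by
    refine (norm_powMean_sub_one_le hμ N.succ_pos).trans ?_
    calc ((N + 1 : ℕ) : ℝ) * ‖μ - 1‖ ≤ (N + 1) * (1 / (4 * (N + 1))) := by push_cast; gcongr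
      _ = 1 / 4 := by field_simp
  obtain ⟨n, h_end, hnN⟩ := (((tendsto_powMean_zero hμ (hnotroot k hk)).eventually
    (closedBall_mem_nhds 0 (by norm_num : (0:ℝ) < 1 / 4))).and (eventually_ge_atTop N)).exists
  rw [dist_zero_right] at h_end
  have h_close : ‖powMean (N + 1) μ - powMean n μ‖ ≤ 1 / 4 := by
    have h_unit : ∀ z ∈ closedBall (0:ℂ) 1, ‖z ^ k‖ ≤ 1 := fun z hz => by
      simpa [norm_pow] using pow_le_one₀ (norm_nonneg z) (mem_closedBall_zero_iff.mp hz)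
    simpa only [cesaro_mul_left_pow_one] using
      hN (N + 1) N.le_succ n hnN _ (isDiscAlg_pow k) h_unit 1 (by simp)
  have h_one := norm_le_norm_add_norm_sub (powMean (N + 1) μ) 1
  have h_tri := norm_le_norm_add_norm_sub' (powMean (N + 1) μ) (powMean n μ)
  rw [norm_one] at h_one
  linarith
end
end

section
/- Let φ ∈ A(𝔻) be a symbol mapping 𝔻̄ into 𝔻̄ whose iterates φ^n converge to a point z₀ ∈ 𝔻̄ uniformly on the compact subsets of 𝔻 (z₀ is the Denjoy–Wolff point of φ). If the composition operator C_φ : A(𝔻) → A(𝔻) is mean ergodic, then for every f ∈ A(𝔻) and every z ∈ 𝔻̄ one has lim_{n→∞} (1/n) Σ_{m=1}^n f(φ^m(z)) = f(z₀). -/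
/-!
On the open disc the orbit `φⁿ z` tends to `z₀`, so by continuity of `f` at `z₀` and Cesàro's
lemma the means `(1/n) ∑ f (φᵐ z)` tend to `f z₀` there. Mean ergodicity provides a uniform limit
of these continuous means on the closed disc; it is continuous, equal to `f z₀` on the dense open
disc, hence equal to `f z₀` everywhere.
-/

open Metric Set Filter Complex
open scoped Topology Classical

noncomputable section

lemma cesaro_eq_smul_sum_range (φ f : ℂ → ℂ) (n : ℕ) (z : ℂ) :
    cesaro φ f n z = (n⁻¹ : ℝ) • ∑ i ∈ Finset.range n, f (φ^[i + 1] z) := by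
  rw [cesaro, ← Finset.Ico_add_one_right_eq_Icc, Finset.sum_Ico_eq_sum_range, Complex.real_smul]
  simp only [Nat.add_sub_cancel, add_comm 1]
  push_cast
  rfl

lemma continuousOn_cesaro {φ f : ℂ → ℂ} {s : Set ℂ} (hφ : ContinuousOn φ s) (hs : MapsTo φ s s)
    (hf : ContinuousOn f s) (n : ℕ) : ContinuousOn (cesaro φ f n) s :=
  continuousOn_const.mul <| continuousOn_finsetSum _ fun m _ =>
    hf.comp (hφ.iterate hs m) (hs.iterate m)

lemma tendsto_cesaro_of_tendsto_iterate {φ f : ℂ → ℂ} {s : Set ℂ} {z z₀ : ℂ}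
    (hs : MapsTo φ s s) (hz : z ∈ s) (hf : ContinuousWithinAt f s z₀)
    (horbit : Tendsto (fun n : ℕ => φ^[n] z) atTop (𝓝 z₀)) :
    Tendsto (fun n : ℕ => cesaro φ f n z) atTop (𝓝 (f z₀)) := by
  have horbit_succ : Tendsto (fun i : ℕ => φ^[i + 1] z) atTop (𝓝[s] z₀) :=
    tendsto_nhdsWithin_iff.mpr
      ⟨horbit.comp (tendsto_add_atTop_nat 1), .of_forall fun i => hs.iterate (i + 1) hz⟩
  simpa only [cesaro_eq_smul_sum_range, Function.comp_def] using
    (hf.tendsto.comp horbit_succ).cesaro_smul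

/-- The uniform limit is continuous on `t`, hence constant on `t ⊆ closure s`. -/
lemma TendstoUniformlyOn.tendsto_const_of_dense {X Y : Type*} [TopologicalSpace X]
    [UniformSpace Y] [T2Space Y] {F : ℕ → X → Y} {g : X → Y} {s t : Set X} {c : Y}
    (hF : TendstoUniformlyOn F g atTop t) (hcont : ∀ n, ContinuousOn (F n) t)
    (hst : s ⊆ t) (hts : t ⊆ closure s) (hs : ∀ x ∈ s, Tendsto (fun n => F n x) atTop (𝓝 c)) :
    ∀ x ∈ t, Tendsto (fun n => F n x) atTop (𝓝 c) := by
  have hgs : EqOn g (fun _ => c) s := fun x hx =>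
    tendsto_nhds_unique (hF.tendsto_at (hst hx)) (hs x hx)
  have hgt : EqOn g (fun _ => c) t :=
    hgs.of_subset_closure (hF.continuousOn (.of_forall hcont)) continuousOn_const hst hts
  intro x hx
  simpa only [hgt hx] using hF.tendsto_at hx

theorem stmt_5_general (φ : ℂ → ℂ) (hφa : IsDiscAlg φ)
    (hφm : MapsTo φ (closedBall (0:ℂ) 1) (closedBall (0:ℂ) 1))
    (z₀ : ℂ) (hz₀ : z₀ ∈ closedBall (0:ℂ) 1)
    (hDW : TendstoLocallyUniformlyOn (fun (n : ℕ) (z : ℂ) => φ^[n] z) (fun _ => z₀)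
      atTop (ball (0:ℂ) 1))
    (hme : MeanErgodicDiscAlg φ) :
    ∀ f : ℂ → ℂ, IsDiscAlg f → ∀ z ∈ closedBall (0:ℂ) 1,
      Tendsto (fun n : ℕ => cesaro φ f n z) atTop (𝓝 (f z₀)) := by
  intro f hf
  obtain ⟨g, hg⟩ := hme f hf
  refine hg.tendsto_const_of_dense (continuousOn_cesaro hφa.1 hφm hf.1) ball_subset_closedBall
    (closure_ball (0:ℂ) one_ne_zero).ge fun w hw => ?_
  exact tendsto_cesaro_of_tendsto_iterate hφm (ball_subset_closedBall hw) (hf.1 z₀ hz₀)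
    (hDW.tendsto_at hw)

/-- **Necessary condition for mean ergodicity on `A(𝔻)`.** Let `φ ∈ A(𝔻)` map `𝔻̄` into `𝔻̄`
with Denjoy–Wolff point `z₀ ∈ 𝔻̄` (i.e. `φ^n → z₀` uniformly on compact subsets of `𝔻`).
If `C_φ : A(𝔻) → A(𝔻)` is mean ergodic, then `(1/n) ∑_{m=1}^n f(φ^m(z)) → f(z₀)` for every
`f ∈ A(𝔻)` and every `z ∈ 𝔻̄`. -/
theorem stmt_5 (φ : ℂ → ℂ) (hφa : IsDiscAlg φ)
    (hφm : MapsTo φ (closedBall (0:ℂ) 1) (closedBall (0:ℂ) 1))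
    (hφb : MapsTo φ (ball (0:ℂ) 1) (ball (0:ℂ) 1))
    (z₀ : ℂ) (hz₀ : z₀ ∈ closedBall (0:ℂ) 1)
    (hDW : TendstoLocallyUniformlyOn (fun (n : ℕ) (z : ℂ) => φ^[n] z) (fun _ => z₀)
      atTop (ball (0:ℂ) 1))
    (hme : MeanErgodicDiscAlg φ) :
    ∀ f : ℂ → ℂ, IsDiscAlg f → ∀ z ∈ closedBall (0:ℂ) 1,
      Tendsto (fun n : ℕ => cesaro φ f n z) atTop (𝓝 (f z₀)) :=
  stmt_5_general φ hφa hφm z₀ hz₀ hDW hme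
end
end

section
/- Let φ ∈ A(𝔻) be a symbol mapping 𝔻̄ into 𝔻̄ and let z₀ ∈ 𝔻̄. If lim_{n→∞} φ^n(z) = z₀ for every z ∈ 𝔻̄, then the composition operator C_φ : A(𝔻) → A(𝔻) is mean ergodic, and for every f ∈ A(𝔻) the Cesàro means (1/n) Σ_{m=1}^n C_φ^m f converge in the sup norm to the constant function f(z₀). -/
open Metric Set Filter Complex
open scoped Topology Classical

noncomputable section

/-! Orbits need not converge uniformly (think of a parabolic automorphism), but their Cesàro
averages do. If `h` is continuous on a compact invariant set `K` and `h (φ^n x) → 0` for each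
`x ∈ K`, every point has a window length `ℓ ≥ 1` with `∑_{k < ℓ} h (φ^k x) < ℓ δ`; by continuity
the same `ℓ` works near `x`, so by compactness the window lengths are bounded by some `L`.
Cutting an orbit segment of length `n` into such windows bounds its Birkhoff sum by
`n δ + L sup h`. Applied to `h = ‖f - f z₀‖` this gives the theorem, the Cesàro means of `C_φ`
at `z` being Birkhoff averages of `f` along the orbit of `φ z`. -/

section UniformBirkhoff

variable {X : Type*} {K : Set X} {φ : X → X} {h : X → ℝ}
variable {𝕜 E : Type*} [RCLike 𝕜] [NormedAddCommGroup E] [NormedSpace 𝕜 E]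

lemma exists_birkhoffSum_lt_of_tendsto_zero {x : X}
    (hx : Tendsto (fun n => h (φ^[n] x)) atTop (𝓝 0)) {δ : ℝ} (hδ : 0 < δ) :
    ∃ ℓ : ℕ, 0 < ℓ ∧ birkhoffSum φ h ℓ x < ℓ * δ := by
  obtain ⟨ℓ, hlt, hℓ⟩ := ((hx.cesaro.eventually_lt_const hδ).and (eventually_gt_atTop 0)).exists
  refine ⟨ℓ, hℓ, ?_⟩
  rwa [inv_mul_lt_iff₀ (by exact_mod_cast hℓ)] at hlt

lemma birkhoffSum_le_of_window (hφK : MapsTo φ K K) {C δ : ℝ} (hC : ∀ x ∈ K, h x ≤ C)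
    (hC0 : 0 ≤ C) (hδ : 0 ≤ δ) {L : ℕ}
    (hwin : ∀ x ∈ K, ∃ ℓ : ℕ, 0 < ℓ ∧ ℓ ≤ L ∧ birkhoffSum φ h ℓ x ≤ ℓ * δ) (n : ℕ) :
    ∀ x ∈ K, birkhoffSum φ h n x ≤ n * δ + L * C := by
  induction n using Nat.strong_induction_on with
  | _ n ih =>
    intro x hx
    obtain ⟨ℓ, hℓpos, hℓL, hℓ⟩ := hwin x hx
    rcases lt_or_ge n ℓ with hnℓ | hℓn
    · have hsum : birkhoffSum φ h n x ≤ n * C := by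
        simpa [birkhoffSum] using
          Finset.sum_le_card_nsmul (Finset.range n) _ C fun k _ => hC _ (hφK.iterate k hx)
      have hnL : (n : ℝ) ≤ L := by exact_mod_cast (hnℓ.trans_le hℓL).le
      nlinarith
    · obtain ⟨m, rfl⟩ := Nat.exists_eq_add_of_le hℓn
      have hrest := ih m (by omega) _ (hφK.iterate ℓ hx)
      rw [birkhoffSum_add]
      push_cast
      linarith

lemma norm_birkhoffAverage_sub_le (f : X → E) (c : E) {n : ℕ} (hn : n ≠ 0) (x : X) :
    ‖birkhoffAverage 𝕜 φ f n x - c‖ ≤ birkhoffAverage ℝ φ (fun y => ‖f y - c‖) n x := by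
  have hsub : birkhoffAverage 𝕜 φ f n x - c =
      (n : 𝕜)⁻¹ • ∑ k ∈ Finset.range n, (f (φ^[k] x) - c) := by
    rw [Finset.sum_sub_distrib, smul_sub, Finset.sum_const, Finset.card_range,
      ← Nat.cast_smul_eq_nsmul 𝕜, inv_smul_smul₀ (Nat.cast_ne_zero.2 hn)]
    rfl
  rw [hsub, norm_smul, norm_inv, RCLike.norm_natCast, birkhoffAverage, birkhoffSum, smul_eq_mul]
  gcongr
  exact norm_sum_le _ _

variable [TopologicalSpace X]

lemma ContinuousOn.birkhoffSum {M : Type*} [AddCommMonoid M] [TopologicalSpace M]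
    [ContinuousAdd M] {g : X → M} (hg : ContinuousOn g K) (hφ : ContinuousOn φ K)
    (hφK : MapsTo φ K K) (n : ℕ) : ContinuousOn (birkhoffSum φ g n) K :=
  continuousOn_finsetSum _ fun k _ => hg.comp (hφ.iterate hφK k) (hφK.iterate k)

lemma IsCompact.exists_uniform_birkhoffSum_window (hK : IsCompact K) (hφ : ContinuousOn φ K)
    (hφK : MapsTo φ K K) (hh : ContinuousOn h K)
    (hlim : ∀ x ∈ K, Tendsto (fun n => h (φ^[n] x)) atTop (𝓝 0)) {δ : ℝ} (hδ : 0 < δ) :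
    ∃ L : ℕ, ∀ x ∈ K, ∃ ℓ : ℕ, 0 < ℓ ∧ ℓ ≤ L ∧ birkhoffSum φ h ℓ x ≤ ℓ * δ := by
  choose ℓ hℓpos hℓ using fun x (hx : x ∈ K) =>
    exists_birkhoffSum_lt_of_tendsto_zero (hlim x hx) hδ
  obtain ⟨t, hKt⟩ := hK.elim_nhdsWithin_subcover'
    (fun x hx => {y | birkhoffSum φ h (ℓ x hx) y < ℓ x hx * δ})
    (fun x hx => (hh.birkhoffSum hφ hφK (ℓ x hx) x hx).eventually_lt continuousWithinAt_const
      (hℓ x hx))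
  refine ⟨t.sup fun x => ℓ x x.2, fun y hy => ?_⟩
  obtain ⟨x, hxt, hyx⟩ := mem_iUnion₂.1 (hKt hy)
  exact ⟨ℓ x x.2, hℓpos x x.2, Finset.le_sup (f := fun x : K => ℓ x x.2) hxt, hyx.le⟩

theorem IsCompact.eventually_birkhoffAverage_le (hK : IsCompact K) (hφ : ContinuousOn φ K)
    (hφK : MapsTo φ K K) (hh : ContinuousOn h K)
    (hlim : ∀ x ∈ K, Tendsto (fun n => h (φ^[n] x)) atTop (𝓝 0)) {ε : ℝ} (hε : 0 < ε) :
    ∀ᶠ n in atTop, ∀ x ∈ K, birkhoffAverage ℝ φ h n x ≤ ε := by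
  obtain ⟨C, hC⟩ := hK.exists_bound_of_continuousOn hh
  have hCle : ∀ x ∈ K, h x ≤ max C 0 := fun x hx =>
    (le_abs_self _).trans ((hC x hx).trans (le_max_left _ _))
  obtain ⟨L, hL⟩ := hK.exists_uniform_birkhoffSum_window hφ hφK hh hlim (half_pos hε)
  have hsum := birkhoffSum_le_of_window hφK hCle (le_max_right _ _) (half_pos hε).le hL
  filter_upwards [eventually_gt_atTop 0,
    tendsto_natCast_atTop_atTop.eventually_ge_atTop (L * max C 0 / (ε / 2))] with n hn hnL x hx
  rw [div_le_iff₀ (half_pos hε)] at hnL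
  rw [birkhoffAverage, smul_eq_mul, inv_mul_le_iff₀ (by exact_mod_cast hn)]
  linarith [hsum n x hx]

theorem IsCompact.tendstoUniformlyOn_birkhoffAverage (hK : IsCompact K) (hφ : ContinuousOn φ K)
    (hφK : MapsTo φ K K) {f : X → E} {c : E} (hf : ContinuousOn f K)
    (hlim : ∀ x ∈ K, Tendsto (fun n => f (φ^[n] x)) atTop (𝓝 c)) :
    TendstoUniformlyOn (birkhoffAverage 𝕜 φ f) (fun _ => c) atTop K := by
  have hnorm : ∀ x ∈ K, Tendsto (fun n => ‖f (φ^[n] x) - c‖) atTop (𝓝 0) := fun x hx => by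
    simpa using (tendsto_sub_nhds_zero_iff.2 (hlim x hx)).norm
  rw [Metric.tendstoUniformlyOn_iff]
  intro ε hε
  filter_upwards [eventually_ne_atTop 0, hK.eventually_birkhoffAverage_le hφ hφK
    (h := fun y => ‖f y - c‖) (hf.sub continuousOn_const).norm hnorm (half_pos hε)]
    with n hn hle x hx
  rw [dist_comm, dist_eq_norm]
  exact (norm_birkhoffAverage_sub_le f c hn x).trans_lt ((hle x hx).trans_lt (half_lt_self hε))

end UniformBirkhoff

lemma cesaro_eq_birkhoffAverage_comp (φ f : ℂ → ℂ) :
    cesaro φ f = fun n => birkhoffAverage ℂ φ f n ∘ φ := by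
  funext n z
  rw [Function.comp_apply, cesaro, birkhoffAverage, birkhoffSum, smul_eq_mul,
    ← Finset.Ico_add_one_right_eq_Icc, Finset.sum_Ico_eq_sum_range]
  simp only [add_tsub_cancel_right, add_comm 1, Function.iterate_succ_apply]

theorem stmt_6_general (φ : ℂ → ℂ) (hφa : IsDiscAlg φ)
    (hφm : MapsTo φ (closedBall (0:ℂ) 1) (closedBall (0:ℂ) 1))
    (z₀ : ℂ) (hz₀ : z₀ ∈ closedBall (0:ℂ) 1)
    (hconv : ∀ z ∈ closedBall (0:ℂ) 1, Tendsto (fun n : ℕ => φ^[n] z) atTop (𝓝 z₀)) :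
    MeanErgodicDiscAlg φ ∧
    ∀ f : ℂ → ℂ, IsDiscAlg f →
      TendstoUniformlyOn (cesaro φ f) (fun _ => f z₀) atTop (closedBall (0:ℂ) 1) := by
  have key : ∀ f : ℂ → ℂ, IsDiscAlg f →
      TendstoUniformlyOn (cesaro φ f) (fun _ => f z₀) atTop (closedBall (0:ℂ) 1) := by
    intro f hf
    have hlim : ∀ z ∈ closedBall (0:ℂ) 1, Tendsto (fun n => f (φ^[n] z)) atTop (𝓝 (f z₀)) :=
      fun z hz => (hf.1 z₀ hz₀).tendsto.comp
        (tendsto_nhdsWithin_iff.2 ⟨hconv z hz, .of_forall fun n => hφm.iterate n hz⟩)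
    have hunif := (isCompact_closedBall (0:ℂ) 1).tendstoUniformlyOn_birkhoffAverage (𝕜 := ℂ)
      hφa.1 hφm hf.1 hlim
    rw [cesaro_eq_birkhoffAverage_comp]
    exact (hunif.comp φ).mono hφm.subset_preimage
  exact ⟨fun f hf => ⟨_, key f hf⟩, key⟩

/-- **Sufficient condition for mean ergodicity on `A(𝔻)`.** Let `φ ∈ A(𝔻)` map `𝔻̄` into `𝔻̄`
and let `z₀ ∈ 𝔻̄`. If `φ^n(z) → z₀` for every `z ∈ 𝔻̄`, then `C_φ : A(𝔻) → A(𝔻)` is mean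
ergodic and for every `f ∈ A(𝔻)` the Cesàro means converge in sup norm to the constant
`f(z₀)`. -/
theorem stmt_6 (φ : ℂ → ℂ) (hφa : IsDiscAlg φ)
    (hφm : MapsTo φ (closedBall (0:ℂ) 1) (closedBall (0:ℂ) 1))
    (hφb : MapsTo φ (ball (0:ℂ) 1) (ball (0:ℂ) 1))
    (z₀ : ℂ) (hz₀ : z₀ ∈ closedBall (0:ℂ) 1)
    (hconv : ∀ z ∈ closedBall (0:ℂ) 1, Tendsto (fun n : ℕ => φ^[n] z) atTop (𝓝 z₀)) :
    MeanErgodicDiscAlg φ ∧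
    ∀ f : ℂ → ℂ, IsDiscAlg f →
      TendstoUniformlyOn (cesaro φ f) (fun _ => f z₀) atTop (closedBall (0:ℂ) 1) :=
  stmt_6_general φ hφa hφm z₀ hz₀ hconv
end
end

section
/- Let φ be a holomorphic self-map of 𝔻 whose iterates φ^n converge to a point z₀ ∈ ∂𝔻 uniformly on the compact subsets of 𝔻 (φ has a boundary Denjoy–Wolff point). Then the composition operator C_φ : H^∞(𝔻) → H^∞(𝔻) is not mean ergodic (in particular it is not uniformly mean ergodic). -/
open Metric Set Filter Complex
open scoped Topology Classical

noncomputable section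

/-!
Let `z_m = φ^m(0)`. By Schwarz–Pick, consecutive orbit points are at pseudo-hyperbolic distance at
most `|φ(0)| < 1`, so `|z₀ - z_m|` shrinks at most geometrically and
`s_m = log 2 - log |z₀ - z_m|` tends to `∞` with bounded increments. The bounded holomorphic
function `f(z) = exp (i Log (log 2 - Log (1 - z̄₀ z)))` is close to `exp (i log s_m)` at `z_m`, and
`log s_m` moves ever more slowly, so for every `N` and every `t` there are `N` consecutive orbit
points at which `f ≈ e^{it}`. If the Cesàro means of `f` converged uniformly to `g`, then `g` would
be constant along the orbit, while the `N`-th mean at the start of such a window is close to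
`e^{it}`, for `t = 0` and `t = π` alike.
-/

open ComplexConjugate
open scoped Real

def mobius (a z : ℂ) : ℂ := (a - z) / (1 - conj a * z)

lemma norm_one_sub_conj_mul_sq_sub_norm_sub_sq (a z : ℂ) :
    ‖1 - conj a * z‖ ^ 2 - ‖a - z‖ ^ 2 = (1 - ‖a‖ ^ 2) * (1 - ‖z‖ ^ 2) := by
  simp only [← Complex.normSq_eq_norm_sq, Complex.normSq_apply, Complex.sub_re, Complex.sub_im,
    Complex.mul_re, Complex.mul_im, Complex.conj_re, Complex.conj_im, Complex.one_re,
    Complex.one_im]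
  ring

lemma norm_sub_lt_norm_one_sub_conj_mul {a z : ℂ} (ha : ‖a‖ < 1) (hz : ‖z‖ < 1) :
    ‖a - z‖ < ‖1 - conj a * z‖ := by
  have h := norm_one_sub_conj_mul_sq_sub_norm_sub_sq a z
  have : 0 < (1 - ‖a‖ ^ 2) * (1 - ‖z‖ ^ 2) := by
    apply mul_pos <;> nlinarith [norm_nonneg a, norm_nonneg z]
  exact lt_of_pow_lt_pow_left₀ 2 (norm_nonneg _) (by linarith)

lemma one_sub_conj_mul_ne_zero {a z : ℂ} (ha : ‖a‖ < 1) (hz : ‖z‖ < 1) :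
    1 - conj a * z ≠ 0 :=
  norm_pos_iff.1 ((norm_nonneg _).trans_lt (norm_sub_lt_norm_one_sub_conj_mul ha hz))

lemma norm_mobius_lt_one {a z : ℂ} (ha : ‖a‖ < 1) (hz : ‖z‖ < 1) : ‖mobius a z‖ < 1 := by
  rw [mobius, norm_div, div_lt_one (norm_pos_iff.2 (one_sub_conj_mul_ne_zero ha hz))]
  exact norm_sub_lt_norm_one_sub_conj_mul ha hz

lemma differentiableAt_mobius {a z : ℂ} (ha : ‖a‖ < 1) (hz : ‖z‖ < 1) :
    DifferentiableAt ℂ (mobius a) z :=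
  (differentiableAt_const a).sub differentiableAt_id |>.div
    ((differentiableAt_const 1).sub (differentiableAt_id.const_mul _))
    (one_sub_conj_mul_ne_zero ha hz)

/-- The Schwarz–Pick lemma at the origin, in the form `ρ(F 0, F b) ≤ |b|` for the
pseudo-hyperbolic distance `ρ`. -/
lemma schwarz_pick_zero {F : ℂ → ℂ} (hd : DifferentiableOn ℂ F (ball 0 1))
    (hm : MapsTo F (ball 0 1) (ball 0 1)) {b : ℂ} (hb : ‖b‖ < 1) :
    ‖F 0 - F b‖ ≤ ‖b‖ * ‖1 - conj (F 0) * F b‖ := by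
  have hF : ∀ w, ‖w‖ < 1 → ‖F w‖ < 1 := fun w hw =>
    mem_ball_zero_iff.1 (hm (mem_ball_zero_iff.2 hw))
  have h0 := hF 0 (by simp)
  have hG : MapsTo (mobius (F 0) ∘ F) (ball 0 1) (closedBall 0 1) := fun w hw =>
    mem_closedBall_zero_iff.2 (norm_mobius_lt_one h0 (hF w (mem_ball_zero_iff.1 hw))).le
  have hGd : DifferentiableOn ℂ (mobius (F 0) ∘ F) (ball 0 1) := fun w hw =>
    ((differentiableAt_mobius h0 (hF w (mem_ball_zero_iff.1 hw))).comp_differentiableWithinAt w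
      (hd w hw))
  have key := Complex.norm_le_norm_of_mapsTo_ball hGd hG (by simp [mobius]) hb
  rwa [Function.comp_apply, mobius, norm_div,
    div_le_iff₀ (norm_pos_iff.2 (one_sub_conj_mul_ne_zero h0 (hF b hb)))] at key

lemma one_sub_mul_norm_sub_le {a b z₀ : ℂ} {δ : ℝ} (hδ₀ : 0 ≤ δ) (ha : ‖a‖ ≤ 1)
    (hz₀ : ‖z₀‖ = 1) (h : ‖b - a‖ ≤ δ * ‖1 - conj b * a‖) :
    (1 - δ) * ‖z₀ - b‖ ≤ (1 + δ) * ‖z₀ - a‖ := by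
  have hden : ‖1 - conj b * a‖ ≤ (1 - ‖a‖ ^ 2) + ‖b - a‖ := by
    have hsplit : 1 - conj b * a = ((1 - ‖a‖ ^ 2 : ℝ) : ℂ) + conj (a - b) * a := by
      push_cast
      rw [map_sub, ← Complex.conj_mul']
      ring
    rw [hsplit]
    refine (norm_add_le _ _).trans (add_le_add (le_of_eq ?_) ?_)
    · rw [Complex.norm_real, Real.norm_of_nonneg (by nlinarith [norm_nonneg a])]
    · rw [norm_mul, Complex.norm_conj, norm_sub_rev]
      exact mul_le_of_le_one_right (norm_nonneg _) ha
  have hrad : 1 - ‖a‖ ≤ ‖z₀ - a‖ := by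
    simpa [hz₀] using norm_sub_norm_le z₀ a
  have htri : ‖z₀ - b‖ ≤ ‖z₀ - a‖ + ‖b - a‖ := by
    simpa [norm_sub_rev a b] using norm_sub_le_norm_sub_add_norm_sub z₀ a b
  have hstep : (1 - δ) * ‖b - a‖ ≤ 2 * δ * ‖z₀ - a‖ := by
    nlinarith [mul_le_mul_of_nonneg_left hden hδ₀, mul_le_mul_of_nonneg_left hrad hδ₀,
      mul_nonneg hδ₀ (sq_nonneg (1 - ‖a‖))]
  rcases le_or_gt δ 1 with hδ₁ | hδ₁
  · nlinarith
  · nlinarith [norm_nonneg (z₀ - a), norm_nonneg (z₀ - b)]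

def potential (z₀ z : ℂ) : ℂ := Real.log 2 - log (1 - conj z₀ * z)

def witness (z₀ z : ℂ) : ℂ := exp (I * log (potential z₀ z))

section Witness

variable {z₀ z : ℂ}

lemma re_one_sub_conj_mul_pos (hz₀ : ‖z₀‖ = 1) (hz : ‖z‖ < 1) : 0 < (1 - conj z₀ * z).re := by
  have := (conj z₀ * z).re_le_norm
  rw [norm_mul, Complex.norm_conj, hz₀, one_mul] at this
  simp only [Complex.sub_re, Complex.one_re]
  linarith

lemma norm_one_sub_conj_mul (hz₀ : ‖z₀‖ = 1) : ‖1 - conj z₀ * z‖ = ‖z₀ - z‖ := by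
  have h : conj z₀ * z₀ = 1 := by simp [Complex.conj_mul', hz₀]
  rw [show 1 - conj z₀ * z = conj z₀ * (z₀ - z) by linear_combination -h, norm_mul,
    Complex.norm_conj, hz₀, one_mul]

lemma norm_sub_pos_of_norm_lt_one (hz₀ : ‖z₀‖ = 1) (hz : ‖z‖ < 1) : 0 < ‖z₀ - z‖ := by
  linarith [norm_sub_norm_le z₀ z]

lemma potential_re (hz₀ : ‖z₀‖ = 1) :
    (potential z₀ z).re = Real.log 2 - Real.log ‖z₀ - z‖ := by
  simp [potential, Complex.log_re, norm_one_sub_conj_mul hz₀]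

lemma potential_re_pos (hz₀ : ‖z₀‖ = 1) (hz : ‖z‖ < 1) : 0 < (potential z₀ z).re := by
  have hlt : ‖z₀ - z‖ < 2 := by linarith [norm_sub_le z₀ z]
  rw [potential_re hz₀, sub_pos]
  exact Real.log_lt_log (norm_sub_pos_of_norm_lt_one hz₀ hz) hlt

lemma abs_potential_im_le (hz₀ : ‖z₀‖ = 1) (hz : ‖z‖ < 1) :
    |(potential z₀ z).im| ≤ π / 2 := by
  simpa [potential, Complex.log_im] using
    Complex.abs_arg_le_pi_div_two_iff.2 (re_one_sub_conj_mul_pos hz₀ hz).le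

lemma norm_witness_le (hz₀ : ‖z₀‖ = 1) (hz : ‖z‖ < 1) : ‖witness z₀ z‖ ≤ Real.exp (π / 2) := by
  have harg : |(potential z₀ z).arg| ≤ π / 2 :=
    Complex.abs_arg_le_pi_div_two_iff.2 (potential_re_pos hz₀ hz).le
  rw [witness, Complex.norm_exp, Real.exp_le_exp]
  simpa [Complex.log_im] using neg_le.1 (neg_le_of_abs_le harg)

lemma differentiableOn_witness (hz₀ : ‖z₀‖ = 1) : DifferentiableOn ℂ (witness z₀) (ball 0 1) := by
  intro z hz
  rw [mem_ball_zero_iff] at hz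
  have hslit : 1 - conj z₀ * z ∈ slitPlane :=
    Complex.mem_slitPlane_iff.2 (.inl (re_one_sub_conj_mul_pos hz₀ hz))
  have hslit' : potential z₀ z ∈ slitPlane :=
    Complex.mem_slitPlane_iff.2 (.inl (potential_re_pos hz₀ hz))
  have hpot : DifferentiableAt ℂ (potential z₀) z :=
    (differentiableAt_const _).sub
      (((differentiableAt_const 1).sub (differentiableAt_id.const_mul _)).clog hslit)
  exact ((hpot.clog hslit').const_mul I).cexp.differentiableWithinAt

lemma isHInf_witness (hz₀ : ‖z₀‖ = 1) : IsHInf (witness z₀) :=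
  ⟨differentiableOn_witness hz₀, _, fun _ hz => norm_witness_le hz₀ (mem_ball_zero_iff.1 hz)⟩

end Witness

lemma norm_exp_I_mul_log_sub_le {L : ℝ} (hL : 0 < L) {q : ℂ} (hq : ‖q - L‖ ≤ L / 2) :
    ‖exp (I * log q) - exp (I * Real.log L)‖ ≤ 3 * ‖q - L‖ / L := by
  obtain ⟨w, hw_def⟩ : ∃ w : ℂ, w = (q - L) / L := ⟨_, rfl⟩
  have hLc : (L : ℂ) ≠ 0 := Complex.ofReal_ne_zero.2 hL.ne'
  have hw : ‖w‖ = ‖q - L‖ / L := by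
    rw [hw_def, norm_div, Complex.norm_real, Real.norm_of_nonneg hL.le]
  have hw2 : ‖w‖ ≤ 1 / 2 := by
    rw [hw, div_le_iff₀ hL]
    linarith
  have hw1 : 1 + w ≠ 0 := by
    intro h
    rw [eq_neg_of_add_eq_zero_right h, norm_neg, norm_one] at hw2
    norm_num at hw2
  have hlog : log q = Real.log L + log (1 + w) := by
    rw [← Complex.log_ofReal_mul hL hw1, hw_def]
    field_simp
    ring_nf
  have hd := Complex.norm_log_one_add_half_le_self hw2
  have hId : ‖I * log (1 + w)‖ ≤ 1 := by
    rw [norm_mul, Complex.norm_I, one_mul]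
    linarith
  calc ‖exp (I * log q) - exp (I * Real.log L)‖
      = ‖exp (I * Real.log L)‖ * ‖exp (I * log (1 + w)) - 1‖ := by
        rw [← norm_mul, hlog, mul_add, Complex.exp_add, mul_sub, mul_one]
    _ ≤ 1 * (2 * ‖I * log (1 + w)‖) := by
        rw [Complex.norm_exp_I_mul_ofReal]
        gcongr
        exact Complex.norm_exp_sub_one_le hId
    _ ≤ 3 * ‖q - L‖ / L := by
        rw [norm_mul, Complex.norm_I, mul_div_assoc, ← hw]
        linarith

lemma le_add_mul_of_step_le {s : ℕ → ℝ} {B : ℝ} (hstep : ∀ m, s (m + 1) ≤ s m + B) (k m : ℕ) :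
    s (m + k) ≤ s k + m * B := by
  induction m with
  | zero => simp
  | succ m ih =>
    rw [Nat.add_right_comm]
    push_cast
    linarith [hstep (m + k)]

lemma exists_forall_le_and_lt_add_mul {s : ℕ → ℝ} {B L : ℝ}
    (hstep : ∀ m, s (m + 1) ≤ s m + B) (htop : Tendsto s atTop atTop) (h0 : s 0 < L) :
    ∃ k, ∀ m, 0 < m → L ≤ s (m + k) ∧ s (m + k) < L + m * B := by
  obtain ⟨M, hM⟩ := eventually_atTop.1 (htop.eventually_ge_atTop L)
  set k := Nat.findGreatest (fun n => s n < L) M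
  have hk : s k < L := Nat.findGreatest_spec (P := fun n => s n < L) (Nat.zero_le M) h0
  refine ⟨k, fun m hm => ⟨?_, ?_⟩⟩
  · by_cases hmM : m + k ≤ M
    · exact not_lt.1 (Nat.findGreatest_is_greatest (P := fun n => s n < L) (by omega) hmM)
    · exact hM _ (by omega)
  · linarith [le_add_mul_of_step_le hstep k m]

lemma tendsto_potential_re_atTop {z₀ : ℂ} (hz₀ : ‖z₀‖ = 1) {z : ℕ → ℂ} (hz : ∀ m, ‖z m‖ < 1)
    (hlim : Tendsto z atTop (𝓝 z₀)) :
    Tendsto (fun m => (potential z₀ (z m)).re) atTop atTop := by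
  have hsub : Tendsto (fun m => z₀ - z m) atTop (𝓝 0) := by
    simpa using (tendsto_const_nhds (x := z₀)).sub hlim
  have hnorm : Tendsto (fun m => ‖z₀ - z m‖) atTop (𝓝[>] 0) :=
    tendsto_nhdsWithin_iff.2 ⟨by simpa using hsub.norm,
      Eventually.of_forall fun m => norm_sub_pos_of_norm_lt_one hz₀ (hz m)⟩
  simp_rw [potential_re hz₀, sub_eq_add_neg]
  exact tendsto_atTop_add_const_left _ _
    (tendsto_neg_atBot_atTop.comp (Real.tendsto_log_nhdsGT_zero.comp hnorm))

lemma norm_witness_sub_exp_le {z₀ z : ℂ} (hz₀ : ‖z₀‖ = 1) (hz : ‖z‖ < 1) {L D : ℝ} (hL : 0 < L)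
    (hlo : L ≤ (potential z₀ z).re) (hhi : (potential z₀ z).re ≤ L + D) (hD : 2 * (D + 2) ≤ L) :
    ‖witness z₀ z - exp (I * Real.log L)‖ ≤ 3 * (D + 2) / L := by
  set q := potential z₀ z
  have hq : ‖q - L‖ ≤ D + 2 := by
    have him : |q.im| ≤ 2 := (abs_potential_im_le hz₀ hz).trans (by linarith [Real.pi_le_four])
    have := Complex.norm_le_abs_re_add_abs_im (q - L)
    simp only [Complex.sub_re, Complex.ofReal_re, Complex.sub_im, Complex.ofReal_im, sub_zero,
      abs_of_nonneg (sub_nonneg.2 hlo)] at this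
    linarith
  calc _ ≤ 3 * ‖q - L‖ / L := norm_exp_I_mul_log_sub_le hL (by linarith)
    _ ≤ 3 * (D + 2) / L := by gcongr

lemma exists_forall_norm_witness_sub_le {z₀ : ℂ} (hz₀ : ‖z₀‖ = 1) {z : ℕ → ℂ} {C : ℝ}
    (hz : ∀ m, ‖z m‖ < 1) (hlim : Tendsto z atTop (𝓝 z₀)) (hC : 1 ≤ C)
    (hstep : ∀ m, ‖z₀ - z m‖ ≤ C * ‖z₀ - z (m + 1)‖) (t : ℝ) (N : ℕ) {ε : ℝ} (hε : 0 < ε) :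
    ∃ k, ∀ m ∈ Finset.Icc 1 N, ‖witness z₀ (z (m + k)) - exp (I * t)‖ ≤ ε := by
  set s : ℕ → ℝ := fun m => (potential z₀ (z m)).re
  set B := Real.log C
  have hB : 0 ≤ B := Real.log_nonneg hC
  have hpos : ∀ m, 0 < ‖z₀ - z m‖ := fun m => norm_sub_pos_of_norm_lt_one hz₀ (hz m)
  have hsstep : ∀ m, s (m + 1) ≤ s m + B := fun m => by
    have := Real.log_le_log (hpos m) (hstep m)
    rw [Real.log_mul (by positivity) (hpos (m + 1)).ne'] at this
    simp only [s, potential_re hz₀]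
    linarith
  have hL : ∀ᶠ L in atTop, s 0 < L ∧ 2 * (N * B + 2) ≤ L ∧ 3 * (N * B + 2) / L ≤ ε :=
    (eventually_gt_atTop _).and ((eventually_ge_atTop _).and
      ((tendsto_const_nhds.div_atTop tendsto_id).eventually (ge_mem_nhds hε)))
  have hexp : Tendsto (fun j : ℕ => Real.exp (t + 2 * π * j)) atTop atTop :=
    Real.tendsto_exp_atTop.comp (tendsto_atTop_add_const_left _ _
      (tendsto_natCast_atTop_atTop.const_mul_atTop (by positivity)))
  obtain ⟨j, hs0, hL2, hLε⟩ := (hexp.eventually hL).exists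
  set L := Real.exp (t + 2 * π * j)
  have hLpos : 0 < L := Real.exp_pos _
  have hexpL : exp (I * Real.log L) = exp (I * t) := by
    rw [Real.log_exp, Complex.ofReal_add, mul_add, Complex.exp_add,
      show I * ((2 * π * j : ℝ) : ℂ) = j * (2 * π * I) by push_cast; ring,
      Complex.exp_nat_mul_two_pi_mul_I, mul_one]
  obtain ⟨k, hk⟩ := exists_forall_le_and_lt_add_mul hsstep
    (tendsto_potential_re_atTop hz₀ hz hlim) hs0
  refine ⟨k, fun m hm => ?_⟩
  obtain ⟨hm1, hmN⟩ := Finset.mem_Icc.1 hm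
  obtain ⟨hlo, hhi⟩ := hk m hm1
  have hmB : (m : ℝ) * B ≤ N * B := by gcongr
  rw [← hexpL]
  exact (norm_witness_sub_exp_le hz₀ (hz _) hLpos hlo (by linarith) hL2).trans hLε

section Cesaro

variable {φ f : ℂ → ℂ}

lemma cesaro_apply_sub (n : ℕ) (z : ℂ) :
    cesaro φ f n (φ z) - cesaro φ f n z = (n : ℂ)⁻¹ * (f (φ^[n + 1] z) - f (φ z)) := by
  simp only [cesaro, ← mul_sub, ← Function.iterate_succ_apply]
  congr 1
  induction n with
  | zero => simp
  | succ n ih =>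
    rw [Finset.sum_Icc_succ_top (by omega), Finset.sum_Icc_succ_top (by omega)]
    linear_combination ih

lemma tendsto_cesaro_apply_sub {z : ℂ} {M : ℝ} (hM : ∀ m, ‖f (φ^[m] z)‖ ≤ M) :
    Tendsto (fun n => cesaro φ f n (φ z) - cesaro φ f n z) atTop (𝓝 0) := by
  refine squeeze_zero_norm (a := fun n : ℕ => (n : ℝ)⁻¹ * (2 * M)) (fun n => ?_) ?_
  · rw [cesaro_apply_sub, norm_mul, norm_inv, Complex.norm_natCast]
    gcongr
    have hφz : ‖f (φ z)‖ ≤ M := hM 1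
    linarith [norm_sub_le (f (φ^[n + 1] z)) (f (φ z)), hM (n + 1)]
  · simpa using tendsto_inv_atTop_nhds_zero_nat.mul_const (2 * M)

lemma apply_iterate_eq_of_tendsto_cesaro {g : ℂ → ℂ} {S : Set ℂ} {M : ℝ} (hS : MapsTo φ S S)
    (hf : ∀ x ∈ S, ‖f x‖ ≤ M)
    (hg : ∀ x ∈ S, Tendsto (fun n => cesaro φ f n x) atTop (𝓝 (g x))) {z : ℂ} (hz : z ∈ S)
    (k : ℕ) : g (φ^[k] z) = g z := by
  induction k with
  | zero => rfl
  | succ k ih =>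
    have hx := hS.iterate k hz
    have hlim := ((hg _ (hS hx)).sub (hg _ hx))
    rw [← ih, Function.iterate_succ_apply', ← sub_eq_zero]
    exact tendsto_nhds_unique hlim
      (tendsto_cesaro_apply_sub fun m => hf _ (hS.iterate m hx))

lemma norm_cesaro_sub_le {n : ℕ} (hn : n ≠ 0) {z c : ℂ} {ε : ℝ}
    (h : ∀ m ∈ Finset.Icc 1 n, ‖f (φ^[m] z) - c‖ ≤ ε) : ‖cesaro φ f n z - c‖ ≤ ε := by
  have hsum : cesaro φ f n z - c = (n : ℂ)⁻¹ * ∑ m ∈ Finset.Icc 1 n, (f (φ^[m] z) - c) := by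
    rw [cesaro, Finset.sum_sub_distrib, Finset.sum_const, Nat.card_Icc, Nat.add_sub_cancel,
      nsmul_eq_mul, mul_sub, ← mul_assoc, inv_mul_cancel₀ (Nat.cast_ne_zero.2 hn), one_mul]
  calc ‖cesaro φ f n z - c‖ ≤ (n : ℝ)⁻¹ * (n * ε) := by
        rw [hsum, norm_mul, norm_inv, Complex.norm_natCast]
        gcongr
        simpa using (norm_sum_le _ _).trans (Finset.sum_le_card_nsmul _ _ _ h)
    _ = ε := by field_simp

end Cesaro

lemma cesaro_const_mul (φ f : ℂ → ℂ) (a : ℂ) (n : ℕ) (z : ℂ) :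
    cesaro φ (fun x => a * f x) n z = a * cesaro φ f n z := by
  simp only [cesaro, ← Finset.mul_sum]
  ring

lemma UnifMeanErgodicHInf.meanErgodicHInf {φ : ℂ → ℂ} (h : UnifMeanErgodicHInf φ) :
    MeanErgodicHInf φ := by
  obtain ⟨P, hP⟩ := h
  rintro f ⟨hfd, M, hM⟩
  set c : ℝ := max M 1
  have hc : (c : ℂ) ≠ 0 := Complex.ofReal_ne_zero.2 (by positivity)
  set f' : ℂ → ℂ := fun x => (c : ℂ)⁻¹ * f x
  have hf'1 : ∀ z ∈ ball (0 : ℂ) 1, ‖f' z‖ ≤ 1 := fun z hz => by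
    rw [norm_mul, norm_inv, Complex.norm_real, Real.norm_of_nonneg (by positivity),
      inv_mul_le_one₀ (by positivity)]
    exact (hM z hz).trans (le_max_left _ _)
  have hconv : TendstoUniformlyOn (cesaro φ f') (P f') atTop (ball 0 1) := by
    refine Metric.tendstoUniformlyOn_iff.2 fun ε hε => eventually_atTop.2 ?_
    obtain ⟨N, hN⟩ := hP (ε / 2) (half_pos hε)
    exact ⟨N, fun n hn z hz => by
      rw [dist_comm, dist_eq_norm]
      linarith [hN n hn f' ⟨hfd.const_mul _, 1, hf'1⟩ hf'1 z hz]⟩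
  refine ⟨(fun x => (c : ℂ) • x) ∘ P f', ?_⟩
  convert (uniformContinuous_const_smul (c : ℂ)).comp_tendstoUniformlyOn hconv using 1
  ext n z
  simp [f', cesaro_const_mul, hc]

/-- By Schwarz–Pick, consecutive points of the orbit of `0` are at pseudo-hyperbolic distance at
most `‖φ 0‖`. -/
lemma norm_sub_iterate_le {φ : ℂ → ℂ} (hφd : DifferentiableOn ℂ φ (ball 0 1))
    (hφm : MapsTo φ (ball 0 1) (ball 0 1)) {z₀ : ℂ} (hz₀ : ‖z₀‖ = 1) (m : ℕ) :
    ‖z₀ - φ^[m] 0‖ ≤ (1 + ‖φ 0‖) / (1 - ‖φ 0‖) * ‖z₀ - φ^[m + 1] 0‖ := by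
  have hφ0 : ‖φ 0‖ < 1 := mem_ball_zero_iff.1 (hφm (mem_ball_self one_pos))
  have hsp := schwarz_pick_zero (hφd.iterate hφm m) (hφm.iterate m) hφ0
  rw [← Function.iterate_succ_apply] at hsp
  have hnext : ‖φ^[m + 1] 0‖ ≤ 1 :=
    (mem_ball_zero_iff.1 (hφm.iterate (m + 1) (mem_ball_self one_pos))).le
  have hcmp := one_sub_mul_norm_sub_le (norm_nonneg _) hnext hz₀ hsp
  rw [div_mul_eq_mul_div, le_div_iff₀ (by linarith)]
  linarith

lemma not_meanErgodicHInf {φ : ℂ → ℂ} (hφd : DifferentiableOn ℂ φ (ball 0 1))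
    (hφm : MapsTo φ (ball 0 1) (ball 0 1)) {z₀ : ℂ} (hz₀ : ‖z₀‖ = 1)
    (hDW : Tendsto (fun n => φ^[n] 0) atTop (𝓝 z₀)) : ¬ MeanErgodicHInf φ := by
  intro hME
  have hφ0 : ‖φ 0‖ < 1 := mem_ball_zero_iff.1 (hφm (mem_ball_self one_pos))
  have hC : 1 ≤ (1 + ‖φ 0‖) / (1 - ‖φ 0‖) :=
    (one_le_div (by linarith)).2 (by linarith [norm_nonneg (φ 0)])
  have horbit : ∀ m, φ^[m] 0 ∈ ball (0 : ℂ) 1 := fun m => hφm.iterate m (mem_ball_self one_pos)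
  obtain ⟨g, hg⟩ := hME _ (isHInf_witness hz₀)
  have hinv : ∀ k, g (φ^[k] 0) = g 0 :=
    apply_iterate_eq_of_tendsto_cesaro hφm
      (fun x hx => norm_witness_le hz₀ (mem_ball_zero_iff.1 hx)) (fun x hx => hg.tendsto_at hx)
      (mem_ball_self one_pos)
  obtain ⟨N, hN0, hN⟩ := ((eventually_ne_atTop 0).and
    (Metric.tendstoUniformlyOn_iff.1 hg (1 / 2) (by norm_num))).exists
  have hnear : ∀ t : ℝ, ‖g 0 - exp (I * t)‖ < 1 := fun t => by
    obtain ⟨k, hk⟩ := exists_forall_norm_witness_sub_le hz₀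
      (fun m => mem_ball_zero_iff.1 (horbit m)) hDW hC (norm_sub_iterate_le hφd hφm hz₀) t N
      (by norm_num : (0 : ℝ) < 1 / 2)
    have hces := norm_cesaro_sub_le hN0 (z := φ^[k] 0) fun m hm => by
      rw [← Function.iterate_add_apply]
      exact hk m hm
    have hdist := hN _ (horbit k)
    rw [hinv k, dist_eq_norm] at hdist
    linarith [norm_sub_le_norm_sub_add_norm_sub (g 0) (cesaro φ (witness z₀) N (φ^[k] 0))
      (exp (I * t))]
  have hone := hnear 0
  have hneg_one := hnear π
  rw [Complex.ofReal_zero, mul_zero, Complex.exp_zero] at hone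
  rw [mul_comm, Complex.exp_pi_mul_I] at hneg_one
  have htwo := norm_sub_le (g 0 - -1) (g 0 - 1)
  rw [show g 0 - -1 - (g 0 - 1) = 2 by ring, Complex.norm_two] at htwo
  linarith

/-- **Boundary Denjoy–Wolff point: never mean ergodic on `H^∞(𝔻)`.** Let `φ` be a
holomorphic self-map of `𝔻` whose iterates converge, uniformly on compact subsets of `𝔻`,
to a point `z₀ ∈ ∂𝔻`. Then `C_φ : H^∞(𝔻) → H^∞(𝔻)` is not mean ergodic, and in particular
not uniformly mean ergodic. -/
theorem stmt_9 (φ : ℂ → ℂ) (hφd : DifferentiableOn ℂ φ (ball (0:ℂ) 1))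
    (hφm : MapsTo φ (ball (0:ℂ) 1) (ball (0:ℂ) 1))
    (z₀ : ℂ) (hz₀ : ‖z₀‖ = 1)
    (hDW : TendstoLocallyUniformlyOn (fun (n : ℕ) (z : ℂ) => φ^[n] z) (fun _ => z₀)
      atTop (ball (0:ℂ) 1)) :
    ¬ MeanErgodicHInf φ ∧ ¬ UnifMeanErgodicHInf φ := by
  have h := not_meanErgodicHInf hφd hφm hz₀ (hDW.tendsto_at (mem_ball_self one_pos))
  exact ⟨h, fun hU => h hU.meanErgodicHInf⟩
end
end
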